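/- Any two distinct maximal cyclic subgroups of the discrete Heisenberg group Γ₃ intersect trivially: if H and H' are maximal cyclic subgroups of Γ₃ and H ∩ H' is nontrivial, then H = H'. -/

import Mathlib

/-
If `x ^ m = y ^ n ≠ 1`, then `m, n ≠ 0`, and comparing images in the abelianization `ℤ²`
shows that `(x.a, x.b)` and `(y.a, y.b)` are parallel, which is exactly the condition for `x`
and `y` to commute. Since `Γ₃` is torsion-free, dividing `m` and `n` by their gcd keeps the
relation, and for coprime `m, n` with `u * m + v * n = 1` the element `z = x ^ v * y ^ u`
satisfies `z ^ n = x` and `z ^ m = y`. So `⟨x⟩` and `⟨y⟩` both lie in the cyclic group `⟨z⟩`,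
and maximality forces `⟨x⟩ = ⟨z⟩ = ⟨y⟩`.
-/

/-- The discrete Heisenberg group `Γ₃`: triples `(a,b,c)` of integers, corresponding to the
upper unitriangular matrix `[[1,a,c],[0,1,b],[0,0,1]]`, with multiplication
`(a,b,c)·(a',b',c') = (a+a', b+b', c+c'+a*b')`. -/
@[ext]
structure Heisenberg where
  a : ℤ
  b : ℤ
  c : ℤ

namespace Heisenberg

instance : Mul Heisenberg :=
  ⟨fun x y => ⟨x.a + y.a, x.b + y.b, x.c + y.c + x.a * y.b⟩⟩

instance : One Heisenberg := ⟨⟨0, 0, 0⟩⟩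

instance : Inv Heisenberg := ⟨fun x => ⟨-x.a, -x.b, -x.c + x.a * x.b⟩⟩

theorem mul_def (x y : Heisenberg) :
    x * y = ⟨x.a + y.a, x.b + y.b, x.c + y.c + x.a * y.b⟩ := rfl

theorem one_def : (1 : Heisenberg) = ⟨0, 0, 0⟩ := rfl

theorem inv_def (x : Heisenberg) : x⁻¹ = ⟨-x.a, -x.b, -x.c + x.a * x.b⟩ := rfl

instance : Group Heisenberg where
  mul_assoc x y z := by ext <;> simp [mul_def] <;> ring
  one_mul x := by ext <;> simp [mul_def, one_def]
  mul_one x := by ext <;> simp [mul_def, one_def]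
  inv_mul_cancel x := by ext <;> simp [mul_def, inv_def, one_def]

end Heisenberg

/-- `H` is a maximal cyclic subgroup of `G`: `H` is cyclic and maximal with respect to
inclusion among cyclic subgroups of `G`. -/
def IsMaximalCyclic {G : Type*} [Group G] (H : Subgroup G) : Prop :=
  IsCyclic H ∧ ∀ K : Subgroup G, IsCyclic K → H ≤ K → K = H

open Subgroup

section CommonRoot

variable {G : Type*} [Group G] {x y : G} {m n : ℤ}

theorem Commute.exists_mem_zpowers_of_zpow_eq_zpow_of_isCoprime (hxy : Commute x y)
    (h : x ^ m = y ^ n) (hmn : IsCoprime m n) :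
    ∃ z, x ∈ zpowers z ∧ y ∈ zpowers z := by
  obtain ⟨u, v, huv⟩ := hmn
  have hpow (k : ℤ) : (x ^ v * y ^ u) ^ k = x ^ (v * k) * y ^ (u * k) := by
    rw [(hxy.zpow_zpow v u).mul_zpow, zpow_mul, zpow_mul]
  refine ⟨x ^ v * y ^ u, mem_zpowers_iff.2 ⟨n, ?_⟩, mem_zpowers_iff.2 ⟨m, ?_⟩⟩
  · rw [hpow, mul_comm u, zpow_mul y n, ← h, ← zpow_mul, ← zpow_add,
      show v * n + m * u = 1 by linarith, zpow_one]
  · rw [hpow, mul_comm v, zpow_mul x m, h, ← zpow_mul, ← zpow_add,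
      show n * v + u * m = 1 by linarith, zpow_one]

theorem Commute.exists_mem_zpowers_of_zpow_eq_zpow [IsMulTorsionFree G] (hxy : Commute x y)
    (h : x ^ m = y ^ n) (hm : m ≠ 0) : ∃ z, x ∈ zpowers z ∧ y ∈ zpowers z := by
  obtain ⟨d, m', n', hd, hmn', rfl, rfl⟩ :=
    Int.exists_gcd_one' (Int.gcd_pos_of_ne_zero_left n hm)
  refine hxy.exists_mem_zpowers_of_zpow_eq_zpow_of_isCoprime ?_
    (Int.isCoprime_iff_gcd_eq_one.2 hmn')
  rw [zpow_mul, zpow_mul] at h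
  exact zpow_left_injective (by exact_mod_cast hd.ne') h

end CommonRoot

namespace Heisenberg

def abelianize : Heisenberg →* Multiplicative (ℤ × ℤ) where
  toFun x := Multiplicative.ofAdd (x.a, x.b)
  map_one' := rfl
  map_mul' _ _ := rfl

theorem zpow_a (x : Heisenberg) (n : ℤ) : (x ^ n).a = n * x.a :=
  congrArg (fun p => p.toAdd.1) (map_zpow abelianize x n)

theorem zpow_b (x : Heisenberg) (n : ℤ) : (x ^ n).b = n * x.b :=
  congrArg (fun p => p.toAdd.2) (map_zpow abelianize x n)

theorem pow_c (x : Heisenberg) (n : ℕ) : (x ^ n).c = n * x.c + n.choose 2 * x.a * x.b := by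
  induction n with
  | zero => simp [one_def]
  | succ n ih =>
    have ha : (x ^ n).a = n * x.a := by exact_mod_cast zpow_a x n
    rw [pow_succ, mul_def]
    simp only [ih, ha, Nat.choose_succ_succ', Nat.choose_one_right]
    push_cast
    ring

instance : IsMulTorsionFree Heisenberg where
  pow_left_injective n hn x y h := by
    have hn' : (n : ℤ) ≠ 0 := by exact_mod_cast hn
    have hxy : x ^ (n : ℤ) = y ^ (n : ℤ) := by simpa only [zpow_natCast] using h
    have ha : x.a = y.a := mul_left_cancel₀ hn' (by rw [← zpow_a, ← zpow_a, hxy])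
    have hb : x.b = y.b := mul_left_cancel₀ hn' (by rw [← zpow_b, ← zpow_b, hxy])
    have hc : x.c = y.c := mul_left_cancel₀ hn' <| by
      have := congrArg Heisenberg.c h
      rw [pow_c, pow_c, ha, hb] at this
      linarith
    exact Heisenberg.ext ha hb hc

theorem commute_iff {x y : Heisenberg} : Commute x y ↔ x.a * y.b = y.a * x.b := by
  rw [Commute, SemiconjBy, mul_def, mul_def, Heisenberg.mk.injEq]
  constructor
  · rintro ⟨-, -, hc⟩
    linarith
  · intro h
    refine ⟨add_comm _ _, add_comm _ _, ?_⟩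
    linarith

theorem commute_of_zpow_eq_zpow {x y : Heisenberg} {m n : ℤ} (hm : m ≠ 0) (hn : n ≠ 0)
    (h : x ^ m = y ^ n) : Commute x y := by
  have ha : m * x.a = n * y.a := by rw [← zpow_a, ← zpow_a, h]
  have hb : m * x.b = n * y.b := by rw [← zpow_b, ← zpow_b, h]
  refine commute_iff.2 (mul_left_cancel₀ (mul_ne_zero hm hn) ?_)
  linear_combination (n * y.b) * ha - (n * y.a) * hb

end Heisenberg

/-- Any two distinct maximal cyclic subgroups of the discrete Heisenberg group `Γ₃`
intersect trivially: if their intersection is nontrivial, they are equal. -/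
theorem heisenberg_maximalCyclic_inter (H H' : Subgroup Heisenberg)
    (hH : IsMaximalCyclic H) (hH' : IsMaximalCyclic H') (hne : H ⊓ H' ≠ ⊥) :
    H = H' := by
  obtain ⟨x, rfl⟩ := H.isCyclic_iff_exists_zpowers_eq_top.1 hH.1
  obtain ⟨y, rfl⟩ := H'.isCyclic_iff_exists_zpowers_eq_top.1 hH'.1
  obtain ⟨w, ⟨⟨m, rfl⟩, ⟨n, hn⟩⟩, hw⟩ :=
    (zpowers x ⊓ zpowers y).bot_or_exists_ne_one.resolve_left hne
  have hm0 : m ≠ 0 := by rintro rfl; exact hw (zpow_zero x)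
  have hn0 : n ≠ 0 := by rintro rfl; exact hw (hn.symm.trans (zpow_zero y))
  have hxy : x ^ m = y ^ n := hn.symm
  obtain ⟨z, hxz, hyz⟩ :=
    (Heisenberg.commute_of_zpow_eq_zpow hm0 hn0 hxy).exists_mem_zpowers_of_zpow_eq_zpow hxy hm0
  rw [← hH.2 _ inferInstance (zpowers_le.2 hxz),
    ← hH'.2 _ inferInstance (zpowers_le.2 hyz)]
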